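/- For n ≥ 3 and m ≥ 1, the generalized Mycielski graph M_m(C_n) of the n-cycle is a cover graph if and only if n is even. -/

import Mathlib

variable {V : Type*}

/-- An orientation of a simple graph `G`: each edge gets exactly one direction. -/
structure Orient (G : SimpleGraph V) where
  dir : V → V → Prop
  dir_adj : ∀ u v, dir u v → G.Adj u v
  adj_dir : ∀ u v, G.Adj u v → dir u v ∨ dir v u
  asymm : ∀ u v, dir u v → ¬ dir v u

/-- The relation obtained from `dir` by reversing the single arc `u → v`. -/
def reverseArc (dir : V → V → Prop) (u v : V) : V → V → Prop :=
  fun a b => (dir a b ∧ ¬(a = u ∧ b = v)) ∨ (a = v ∧ b = u)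

/-- A relation is acyclic if there is no directed cycle. -/
def IsAcyclicRel (dir : V → V → Prop) : Prop :=
  ∀ u v, dir u v → ¬ Relation.ReflTransGen dir v u

/-- An arc `u → v` is dependent if its reversal creates a directed cycle. -/
def DependentArc (dir : V → V → Prop) (u v : V) : Prop :=
  dir u v ∧ ¬ IsAcyclicRel (reverseArc dir u v)

/-- A cover graph admits an acyclic orientation with no dependent arcs. -/
def IsCoverGraph (G : SimpleGraph V) : Prop :=
  ∃ D : Orient G, IsAcyclicRel D.dir ∧ ∀ u v, ¬ DependentArc D.dir u v

/-- The number of dependent arcs of an orientation. -/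
noncomputable def numDependent {G : SimpleGraph V} (D : Orient G) : ℕ :=
  Set.ncard {p : V × V | DependentArc D.dir p.1 p.2}

/-- `d_min`: minimum number of dependent arcs over all acyclic orientations. -/
noncomputable def dmin (G : SimpleGraph V) : ℕ :=
  sInf {n | ∃ D : Orient G, IsAcyclicRel D.dir ∧ numDependent D = n}

/-- `d_max`: maximum number of dependent arcs over all acyclic orientations. -/
noncomputable def dmax (G : SimpleGraph V) : ℕ :=
  sSup {n | ∃ D : Orient G, IsAcyclicRel D.dir ∧ numDependent D = n}

/-- `c(G)`: minimum number of edges to delete from `G` to get a cover graph. -/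
noncomputable def coverDeletion (G : SimpleGraph V) : ℕ :=
  sInf {n | ∃ F : Set (Sym2 V), F ⊆ G.edgeSet ∧ IsCoverGraph (G.deleteEdges F) ∧ F.ncard = n}

/-- The generalized Mycielski graph `M_m(G)`; `none` is the apex `u`,
`some (i, a)` is the vertex `⟨i, a⟩`. -/
def genMycielski (G : SimpleGraph V) (m : ℕ) : SimpleGraph (Option (Fin (m + 1) × V)) where
  Adj x y :=
    match x, y with
    | some (i, a), some (j, b) =>
        G.Adj a b ∧ ((i = j ∧ (i : ℕ) = 0) ∨ (i : ℕ) + 1 = (j : ℕ) ∨ (j : ℕ) + 1 = (i : ℕ))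
    | some (i, _), none => (i : ℕ) = m
    | none, some (j, _) => (j : ℕ) = m
    | none, none => False
  symm := by
    constructor
    rintro (_ | ⟨i, a⟩) (_ | ⟨j, b⟩) h
    · exact h
    · exact h
    · exact h
    · refine ⟨h.1.symm, ?_⟩
      rcases h.2 with ⟨h1, h2⟩ | h' | h'
      · exact Or.inl ⟨h1.symm, h1 ▸ h2⟩
      · exact Or.inr (Or.inr h')
      · exact Or.inr (Or.inl h')
  loopless := by
    constructor
    rintro (_ | ⟨i, a⟩) h <;> simp_all

/-!
If `n` is even, give the vertices of each level height `0` or `1` according to the parity of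
their position on the cycle, and the apex height `2`; orienting every edge upwards is acyclic.
A dependent arc would need a detour climbing through all three heights, hence two adjacent
vertices on the top level, and those exist only when `m = 0`.

If `n` is odd, record the direction of each edge by a sign `±1`. In a cover orientation both
sides of a 4-cycle have the same net direction. Pushing across the 4-cycles between consecutive
levels shows that the closed zigzag walk between levels `i` and `i + 1` has a net direction
independent of `i`; at the bottom it is twice that of the base cycle, and at the apex it is `0`.
So the base cycle would have net direction `0`, impossible for a sum of an odd number of `±1`s.
-/

open SimpleGraph Relation

section Relations

variable {r : V → V → Prop} {u v : V}

lemma potential_le_of_reflTransGen {α : Type*} [Preorder α] {f : V → α}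
    (hf : ∀ a b, r a b → f a < f b) {a b : V} (h : ReflTransGen r a b) : f a ≤ f b := by
  induction h with
  | refl => exact le_rfl
  | tail _ hbc ih => exact ih.trans (hf _ _ hbc).le

lemma isAcyclicRel_of_potential {α : Type*} [Preorder α] {f : V → α}
    (hf : ∀ a b, r a b → f a < f b) : IsAcyclicRel r :=
  fun a b hab hba => (hf a b hab).not_ge (potential_le_of_reflTransGen hf hba)

def deleteArc (r : V → V → Prop) (u v : V) : V → V → Prop :=
  fun a b => r a b ∧ ¬(a = u ∧ b = v)

lemma deleteArc_le : deleteArc r u v ≤ r := fun _ _ h => h.1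

/-- A path for the reversed relation either avoids the new arc `v → u`, or can be cut at its
first and last uses of it, or contains a path `u ⇝ v` between two of its uses. -/
lemma reflTransGen_reverseArc {x y : V} (h : ReflTransGen (reverseArc r u v) x y) :
    ReflTransGen (deleteArc r u v) x y ∨
      (ReflTransGen (deleteArc r u v) x v ∧ ReflTransGen (deleteArc r u v) u y) ∨
      ReflTransGen (deleteArc r u v) u v := by
  induction h with
  | refl => exact Or.inl .refl
  | tail _ hab ih =>
    rcases hab with hab | ⟨rfl, rfl⟩
    · rcases ih with h | ⟨h₁, h₂⟩ | h
      · exact Or.inl (h.tail hab)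
      · exact Or.inr (Or.inl ⟨h₁, h₂.tail hab⟩)
      · exact Or.inr (Or.inr h)
    · rcases ih with h | ⟨-, h⟩ | h
      · exact Or.inr (Or.inl ⟨h, .refl⟩)
      · exact Or.inr (Or.inr h)
      · exact Or.inr (Or.inr h)

theorem dependentArc_iff_exists_detour (hr : IsAcyclicRel r) (huv : r u v) :
    DependentArc r u v ↔ ∃ w, w ≠ v ∧ r u w ∧ ReflTransGen r w v := by
  constructor
  · rintro ⟨-, hcyc⟩
    obtain ⟨a, b, hab, hba⟩ :
        ∃ a b, reverseArc r u v a b ∧ ReflTransGen (reverseArc r u v) b a := by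
      simpa [IsAcyclicRel] using hcyc
    have hbypass : ReflTransGen (deleteArc r u v) u v := by
      rcases hab with hab | ⟨rfl, rfl⟩
      · rcases reflTransGen_reverseArc hba with h | ⟨h₁, h₂⟩ | h
        · exact (hr a b hab.1 (ReflTransGen.mono deleteArc_le _ _ h)).elim
        · exact (h₂.tail hab).trans h₁
        · exact h
      · rcases reflTransGen_reverseArc hba with h | ⟨-, h⟩ | h <;> exact h
    rcases hbypass.cases_head with rfl | ⟨w, ⟨huw, hne⟩, hwv⟩
    · exact (hr u u huv .refl).elim
    · exact ⟨w, fun h => hne ⟨rfl, h⟩, huw, ReflTransGen.mono deleteArc_le _ _ hwv⟩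
  · rintro ⟨w, hwv, huw, hpath⟩
    -- an arc `u → y` on the path `w ⇝ v` would close the cycle `u → w ⇝ u`
    have hlift : ∀ {y}, ReflTransGen r w y → ReflTransGen (reverseArc r u v) w y := by
      intro y h
      induction h with
      | refl => exact .refl
      | tail hwx hxy ih =>
        exact ih.tail (Or.inl ⟨hxy, fun ⟨hx, _⟩ => hr u w huw (hx ▸ hwx)⟩)
    exact ⟨huv, fun hrev => hrev v u (Or.inr ⟨rfl, rfl⟩)
      (.head (Or.inl ⟨huw, fun h => hwv h.2⟩) (hlift hpath))⟩

end Relations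

namespace Orient

variable {G : SimpleGraph V}

def ofPotential {α : Type*} [LinearOrder α] (G : SimpleGraph V) (f : V → α)
    (hf : ∀ a b, G.Adj a b → f a ≠ f b) : Orient G where
  dir a b := G.Adj a b ∧ f a < f b
  dir_adj _ _ h := h.1
  adj_dir a b h := (hf a b h).lt_or_gt.imp (⟨h, ·⟩) (⟨h.symm, ·⟩)
  asymm _ _ h h' := h.2.not_gt h'.2

def IsCover (D : Orient G) : Prop :=
  IsAcyclicRel D.dir ∧ ∀ u v, ¬ DependentArc D.dir u v

open Classical in
noncomputable def sign (D : Orient G) (a b : V) : ℤ :=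
  if D.dir a b then 1 else -1

variable {D : Orient G} {a b c d : V}

lemma sign_add_sign_swap (h : G.Adj a b) : D.sign a b + D.sign b a = 0 := by
  rcases D.adj_dir a b h with h | h <;> simp [sign, h, D.asymm _ _ h]

open Classical in
lemma sign_add_sign_eq_ite (hab : G.Adj a b) (hbc : G.Adj b c) :
    D.sign a b + D.sign b c =
      if D.dir a b ∧ D.dir b c then 2 else if D.dir c b ∧ D.dir b a then -2 else 0 := by
  rcases D.adj_dir a b hab with h₁ | h₁ <;> rcases D.adj_dir b c hbc with h₂ | h₂ <;>
    simp [sign, h₁, h₂, D.asymm _ _ h₁, D.asymm _ _ h₂]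

lemma IsCover.dir_of_square (hD : D.IsCover) (hab : D.dir a b) (hbc : D.dir b c)
    (hcd : G.Adj c d) (hda : G.Adj d a) (hac : a ≠ c) (hbd : b ≠ d) :
    D.dir a d ∧ D.dir d c := by
  rcases D.adj_dir c d hcd with hcd | hdc <;> rcases D.adj_dir d a hda with hda | had
  · exact (hD.1 a b hab (.head hbc (.head hcd (.single hda)))).elim
  · exact hD.2 a d ((dependentArc_iff_exists_detour hD.1 had).2
      ⟨b, hbd, hab, .head hbc (.single hcd)⟩) |>.elim
  · exact hD.2 d c ((dependentArc_iff_exists_detour hD.1 hdc).2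
      ⟨a, hac, hda, .head hab (.single hbc)⟩) |>.elim
  · exact ⟨had, hdc⟩

open Classical in
/-- Around a 4-cycle of a cover orientation, both paths from `a` to `c` have the same net
direction: a square is never oriented as a directed cycle or as a path with a shortcut. -/
lemma IsCover.sign_square (hD : D.IsCover) (hab : G.Adj a b) (hbc : G.Adj b c)
    (hcd : G.Adj c d) (hda : G.Adj d a) :
    D.sign a b + D.sign b c = D.sign a d + D.sign d c := by
  by_cases hac : a = c
  · subst hac
    rw [sign_add_sign_swap hab, sign_add_sign_swap hda.symm]
  by_cases hbd : b = d
  · rw [hbd]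
  have hforward : D.dir a b ∧ D.dir b c ↔ D.dir a d ∧ D.dir d c :=
    ⟨fun h => hD.dir_of_square h.1 h.2 hcd hda hac hbd,
      fun h => hD.dir_of_square h.1 h.2 hbc.symm hab.symm hac (Ne.symm hbd)⟩
  have hbackward : D.dir c b ∧ D.dir b a ↔ D.dir c d ∧ D.dir d a :=
    ⟨fun h => hD.dir_of_square h.1 h.2 hda.symm hcd.symm (Ne.symm hac) hbd,
      fun h => hD.dir_of_square h.1 h.2 hab hbc (Ne.symm hac) (Ne.symm hbd)⟩
  rw [sign_add_sign_eq_ite hab hbc, sign_add_sign_eq_ite hda.symm hcd.symm]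
  exact if_congr hforward rfl (if_congr hbackward rfl rfl)

lemma sum_sign_ne_zero {ι : Type*} [Fintype ι] (hι : Odd (Fintype.card ι)) (p q : ι → V) :
    ∑ i, D.sign (p i) (q i) ≠ 0 := by
  intro h
  have hodd : ∀ i, ((D.sign (p i) (q i) : ℤ) : ZMod 2) = 1 := fun i => by
    unfold sign; split_ifs <;> decide
  have := congrArg (Int.cast : ℤ → ZMod 2) h
  simp only [Int.cast_sum, hodd, Finset.sum_const, Finset.card_univ, nsmul_eq_mul, mul_one,
    Int.cast_zero] at this
  exact ZMod.natCast_ne_zero_iff_odd.2 hι this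

end Orient

section Zigzag

variable {G : SimpleGraph V} {n : ℕ} [NeZero n]

def ZigzagAdj (G : SimpleGraph V) (x y : Fin n → V) : Prop :=
  ∀ j, G.Adj (x j) (y (j + 1)) ∧ G.Adj (x (j + 1)) (y j)

noncomputable def zigzagSum (D : Orient G) (x y : Fin n → V) : ℤ :=
  ∑ j, (D.sign (x j) (y (j + 1)) + D.sign (y (j + 1)) (x (j + 1 + 1)))

lemma sum_comp_add_one {M : Type*} [AddCommMonoid M] (f : Fin n → M) :
    ∑ j, f (j + 1) = ∑ j, f j :=
  Equiv.sum_comp (Equiv.addRight 1) f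

variable {D : Orient G}

lemma zigzagSum_swap (x y : Fin n → V) :
    zigzagSum D x y = ∑ j, (D.sign (y j) (x (j + 1)) + D.sign (x (j + 1)) (y (j + 1 + 1))) := by
  rw [zigzagSum, Finset.sum_add_distrib, Finset.sum_add_distrib, add_comm,
    sum_comp_add_one fun j => D.sign (y j) (x (j + 1)),
    ← sum_comp_add_one fun j => D.sign (x j) (y (j + 1))]

/-- Each square `y j, x (j+1), y (j+2), z (j+1)` lets the walk be pushed from the rows `x, y`
to the rows `y, z`. -/
theorem Orient.IsCover.zigzagSum_eq (hD : D.IsCover) {x y z : Fin n → V}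
    (hxy : ZigzagAdj G x y) (hyz : ZigzagAdj G y z) : zigzagSum D x y = zigzagSum D y z := by
  rw [zigzagSum_swap]
  exact Finset.sum_congr rfl fun j _ =>
    hD.sign_square (hxy j).2.symm (hxy (j + 1)).1 (hyz (j + 1)).2 (hyz j).1.symm

lemma zigzagSum_self (x : Fin n → V) :
    zigzagSum D x x = 2 * ∑ j, D.sign (x j) (x (j + 1)) := by
  rw [zigzagSum, Finset.sum_add_distrib, sum_comp_add_one fun j => D.sign (x j) (x (j + 1)),
    two_mul]

lemma zigzagSum_const {x : Fin n → V} {c : V} (h : ZigzagAdj G x fun _ => c) :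
    zigzagSum D x (fun _ => c) = 0 := by
  rw [zigzagSum, Finset.sum_add_distrib, sum_comp_add_one fun j => D.sign c (x (j + 1)),
    sum_comp_add_one fun j => D.sign c (x j), ← Finset.sum_add_distrib]
  exact Finset.sum_eq_zero fun j _ => Orient.sign_add_sign_swap (h j).1

theorem not_isCoverGraph_of_zigzagAdj (hn : Odd n) (r : ℕ → Fin n → V) (k : ℕ) (c : V)
    (h₀ : ZigzagAdj G (r 0) (r 0)) (hr : ∀ i ≤ k, ZigzagAdj G (r i) (r (i + 1)))
    (hc : r (k + 1) = fun _ => c) : ¬ IsCoverGraph G := by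
  intro hG
  obtain ⟨D, hD⟩ : ∃ D : Orient G, D.IsCover := hG
  have hchain : ∀ i ≤ k, zigzagSum D (r 0) (r 0) = zigzagSum D (r i) (r (i + 1)) := by
    intro i hi
    induction i with
    | zero => exact hD.zigzagSum_eq h₀ (hr 0 hi)
    | succ i ih => exact (ih (by omega)).trans (hD.zigzagSum_eq (hr i (by omega)) (hr (i + 1) hi))
  have htop : zigzagSum D (r k) (r (k + 1)) = 0 := by
    rw [hc]
    exact zigzagSum_const (hc ▸ hr k le_rfl)
  rw [← hchain k le_rfl, zigzagSum_self, mul_eq_zero] at htop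
  exact Orient.sum_sign_ne_zero (by simpa using hn) _ _ (htop.resolve_left two_ne_zero)

end Zigzag

section GenMycielski

variable {G : SimpleGraph V} {m : ℕ}

@[simp]
lemma genMycielski_adj_some_some {i j : Fin (m + 1)} {a b : V} :
    (genMycielski G m).Adj (some (i, a)) (some (j, b)) ↔
      G.Adj a b ∧ ((i = j ∧ (i : ℕ) = 0) ∨ (i : ℕ) + 1 = j ∨ (j : ℕ) + 1 = i) :=
  Iff.rfl

@[simp]
lemma genMycielski_adj_some_none {i : Fin (m + 1)} {a : V} :
    (genMycielski G m).Adj (some (i, a)) none ↔ (i : ℕ) = m :=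
  Iff.rfl

lemma eq_zero_of_genMycielski_adj_of_adj_none {i j : Fin (m + 1)} {a b : V}
    (h : (genMycielski G m).Adj (some (i, a)) (some (j, b)))
    (hi : (genMycielski G m).Adj (some (i, a)) none)
    (hj : (genMycielski G m).Adj (some (j, b)) none) : m = 0 := by
  simp only [genMycielski_adj_some_some, genMycielski_adj_some_none] at h hi hj
  omega

def genMycielskiHeight (C : G.Coloring Bool) : Option (Fin (m + 1) × V) → ℕ
  | none => 2
  | some (_, a) => (C a).toNat

lemma genMycielskiHeight_ne_of_adj (C : G.Coloring Bool) :
    ∀ x y, (genMycielski G m).Adj x y → genMycielskiHeight C x ≠ genMycielskiHeight C y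
  | some (_, a), some (_, b), h => by
    have := C.valid ((genMycielski_adj_some_some).1 h).1
    revert this
    simp only [genMycielskiHeight]
    cases C a <;> cases C b <;> simp
  | some (_, a), none, _ => (Bool.toNat_lt (C a)).ne
  | none, some (_, b), _ => (Bool.toNat_lt (C b)).ne'

lemma eq_none_of_two_le_genMycielskiHeight (C : G.Coloring Bool) :
    ∀ {x : Option (Fin (m + 1) × V)}, 2 ≤ genMycielskiHeight C x → x = none
  | none, _ => rfl
  | some (_, a), h => absurd h (Bool.toNat_lt (C a)).not_ge

theorem isCoverGraph_genMycielski (C : G.Coloring Bool) (hm : m ≠ 0) :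
    IsCoverGraph (genMycielski G m) := by
  let D :=
    Orient.ofPotential (genMycielski G m) (genMycielskiHeight C) (genMycielskiHeight_ne_of_adj C)
  have hD : ∀ a b, D.dir a b → genMycielskiHeight C a < genMycielskiHeight C b :=
    fun _ _ hab => hab.2
  refine ⟨D, isAcyclicRel_of_potential hD, fun u v hdep => ?_⟩
  obtain ⟨w, hwv, huw, hpath⟩ :=
    (dependentArc_iff_exists_detour (isAcyclicRel_of_potential hD) hdep.1).1 hdep
  obtain ⟨x, hwx, hxv⟩ := hpath.cases_head.resolve_left hwv
  have hlt₁ := hD _ _ huw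
  have hlt₂ := hD _ _ hwx
  have hv : v = none := eq_none_of_two_le_genMycielskiHeight C
    (by have := potential_le_of_reflTransGen hD hxv; omega)
  have hx : x = none := eq_none_of_two_le_genMycielskiHeight C (by omega)
  subst hv hx
  rcases u with _ | ⟨i, a⟩
  · exact absurd hlt₁ (by simp [genMycielskiHeight]; omega)
  rcases w with _ | ⟨j, b⟩
  · exact hwv rfl
  exact hm (eq_zero_of_genMycielski_adj_of_adj_none huw.1 hdep.1.1 hwx.1)

end GenMycielski

section Rows

def genMycielskiRow (m i : ℕ) (a : V) : Option (Fin (m + 1) × V) :=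
  if h : i ≤ m then some (⟨i, Nat.lt_succ_of_le h⟩, a) else none

lemma genMycielskiRow_succ_self (m : ℕ) : genMycielskiRow (V := V) m (m + 1) = fun _ => none := by
  funext a
  simp [genMycielskiRow]

variable {n m : ℕ} [NeZero n] {G : SimpleGraph (Fin n)}

lemma zigzagAdj_genMycielskiRow_zero (hG : ∀ j, G.Adj j (j + 1)) :
    ZigzagAdj (genMycielski G m) (genMycielskiRow m 0) (genMycielskiRow m 0) := fun j => by
  simp [genMycielskiRow, hG j, (hG j).symm]

lemma zigzagAdj_genMycielskiRow_succ (hG : ∀ j, G.Adj j (j + 1)) {i : ℕ} (hi : i ≤ m) :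
    ZigzagAdj (genMycielski G m) (genMycielskiRow m i) (genMycielskiRow m (i + 1)) := fun j => by
  rcases hi.lt_or_eq with hi | rfl
  · simp [genMycielskiRow, hi.le, hi, hG j, (hG j).symm]
  · simp [genMycielskiRow]

theorem not_isCoverGraph_genMycielski (hn : Odd n) (hG : ∀ j, G.Adj j (j + 1)) :
    ¬ IsCoverGraph (genMycielski G m) :=
  not_isCoverGraph_of_zigzagAdj hn (genMycielskiRow m) m none (zigzagAdj_genMycielskiRow_zero hG)
    (fun _ hi => zigzagAdj_genMycielskiRow_succ hG hi) (genMycielskiRow_succ_self m)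

end Rows

lemma cycleGraph_adj_add_one {n : ℕ} (j : Fin (n + 2)) : (cycleGraph (n + 2)).Adj j (j + 1) :=
  cycleGraph_adj.2 (Or.inr (add_sub_cancel_left j 1))

theorem genMycielski_cycle_coverGraph_iff_even (n m : ℕ) (hn : 3 ≤ n) (hm : 1 ≤ m) :
    IsCoverGraph (genMycielski (SimpleGraph.cycleGraph n) m) ↔ Even n := by
  refine ⟨fun hcover => ?_, fun heven =>
    isCoverGraph_genMycielski (cycleGraph.bicoloring_of_even n heven) (by omega)⟩
  by_contra hodd
  obtain ⟨k, rfl⟩ : ∃ k, n = k + 2 := ⟨n - 2, by omega⟩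
  exact not_isCoverGraph_genMycielski (Nat.not_even_iff_odd.1 hodd) cycleGraph_adj_add_one hcover
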